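/- For every weakly increasing sequence v : ℕ → ℝ, the law P^{(v)} of the infinite q-shuffle of v is a q-exchangeable Borel probability measure on ℝ^ℕ. -/

import Mathlib

/-!
Encode `σ` by its choice sequence `x = (ξ_j)`. Exchanging `σ(i)` and `σ(i+1)` amounts to replacing
the pair `(x i, x (i+1))` by `swapChoicePair (x i, x (i+1))` and keeping the other choices. As
`x i`, `x (i+1)` are independent geometric variables, the law of `x` is quasi-invariant under this
involution, with density `q` or `q⁻¹` according as `x i ≤ x (i+1)`, i.e. as `σ(i) < σ(i+1)`.
Pushing forward along `x ↦ v ∘ σ`: where `v (σ i) ≠ v (σ (i+1))` the monotonicity of `v` turns this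
density into `q ^ sgn (w (i+1) - w i)`, and where they agree the swap does not change the word.
-/

open MeasureTheory ProbabilityTheory

/-- The first `j` values `σ(0), …, σ(j-1)` of the infinite `q`-shuffle permutation driven by
the (0-indexed) geometric choices `x`. -/
noncomputable def shufflePrefix (x : ℕ → ℕ) : ℕ → List ℕ
  | 0 => []
  | j + 1 => shufflePrefix x j ++ [Nat.nth (fun m => m ∉ shufflePrefix x j) (x j)]

/-- The random injection `σ : ℕ → ℕ` driving the infinite `q`-shuffle: `σ(j)` is the
`x j`-th smallest (0-indexed) natural number not in `{σ(0), …, σ(j-1)}`. -/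
noncomputable def shuffleSeq (x : ℕ → ℕ) (j : ℕ) : ℕ :=
  Nat.nth (fun m => m ∉ shufflePrefix x j) (x j)

/-- The map on sequences that swaps coordinates `i` and `i+1`. -/
def swapCoord {α : Type*} (i : ℕ) (w : ℕ → α) : ℕ → α :=
  fun j => if j = i then w (i + 1) else if j = i + 1 then w i else w j

/-- A Borel probability measure `P` on `ℝ^ℕ` is `q`-exchangeable if for every `i` the
pushforward of `P` under the swap of coordinates `i` and `i+1` equals the measure with
density `w ↦ q ^ sgn (w (i+1) - w i)` with respect to `P`. -/
def IsQExchangeable (q : ℝ) (P : Measure (ℕ → ℝ)) : Prop :=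
  ∀ i : ℕ, P.map (swapCoord i) =
    P.withDensity (fun w => ENNReal.ofReal (q ^ ((SignType.sign (w (i + 1) - w i)) : ℤ)))

open scoped ENNReal

namespace Nat

theorem nth_and_ne_nth {p : ℕ → Prop} (hp : (Set.ofPred p).Infinite) (a b : ℕ) :
    nth (fun m => p m ∧ m ≠ nth p a) b = nth p (if b < a then b else b + 1) := by
  have hp' : (Set.ofPred fun m => p m ∧ m ≠ nth p a).Infinite :=
    hp.sdiff (Set.finite_singleton _)
  refine (eq_nth_of_strictMonoOn_of_mapsTo_of_surjOn (fun k => nth p (if k < a then k else k + 1))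
    ?_ ?_ ?_ fun hf => absurd hf hp').symm
  · rintro m ⟨hm, hma⟩
    obtain ⟨c, rfl⟩ : m ∈ Set.range (nth p) := range_nth_of_infinite hp ▸ hm
    refine ⟨if c < a then c else c - 1, fun hf => absurd hf hp', ?_⟩
    have hca : c ≠ a := fun h => hma (h ▸ rfl)
    dsimp only
    congr 1
    split_ifs <;> omega
  · intro k _
    refine ⟨nth_mem_of_infinite hp _, fun h => ?_⟩
    have := nth_injective hp h
    split_ifs at this <;> omega
  · intro k _ l _ hkl
    simp only [nth_lt_nth hp]
    split_ifs <;> omega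

end Nat

section Shuffle

open Nat

theorem mem_shufflePrefix {x : ℕ → ℕ} {j m : ℕ} :
    m ∈ shufflePrefix x j ↔ ∃ k < j, shuffleSeq x k = m := by
  induction j with
  | zero => simp [shufflePrefix]
  | succ j ih =>
    simp only [shufflePrefix, List.mem_append, ih, List.mem_singleton]
    constructor
    · rintro (⟨k, hk, rfl⟩ | rfl)
      exacts [⟨k, by omega, rfl⟩, ⟨j, by omega, rfl⟩]
    · rintro ⟨k, hk, rfl⟩
      rcases Nat.lt_succ_iff_lt_or_eq.1 hk with hk | rfl
      exacts [Or.inl ⟨k, hk, rfl⟩, Or.inr rfl]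

theorem infinite_notMem_shufflePrefix (x : ℕ → ℕ) (j : ℕ) :
    (Set.ofPred (· ∉ shufflePrefix x j)).Infinite :=
  (shufflePrefix x j).finite_toSet.infinite_compl

theorem shuffleSeq_succ (x : ℕ → ℕ) (j : ℕ) :
    shuffleSeq x (j + 1) = nth (· ∉ shufflePrefix x j)
      (if x (j + 1) < x j then x (j + 1) else x (j + 1) + 1) := by
  rw [← nth_and_ne_nth (infinite_notMem_shufflePrefix x j)]
  simp only [shuffleSeq, shufflePrefix, List.mem_append, List.mem_singleton, not_or]

theorem le_iff_shuffleSeq_lt (x : ℕ → ℕ) (i : ℕ) :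
    x i ≤ x (i + 1) ↔ shuffleSeq x i < shuffleSeq x (i + 1) := by
  rw [shuffleSeq_succ, shuffleSeq, nth_lt_nth (infinite_notMem_shufflePrefix x i)]
  split_ifs <;> omega

end Shuffle

section Swap

/-- If `σ(i)` is the `a`-th free value and `σ(i+1)` the `b`-th value still free after it, then
exchanging `σ(i)` and `σ(i+1)` turns the choices `(a, b)` into `swapChoicePair (a, b)`. -/
def swapChoicePair (ab : ℕ × ℕ) : ℕ × ℕ :=
  if ab.1 ≤ ab.2 then (ab.2 + 1, ab.1) else (ab.2, ab.1 - 1)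

def updatePair (i : ℕ) (ab : ℕ × ℕ) (x : ℕ → ℕ) : ℕ → ℕ :=
  fun j => if j = i then ab.1 else if j = i + 1 then ab.2 else x j

def swapChoices (i : ℕ) (x : ℕ → ℕ) : ℕ → ℕ :=
  updatePair i (swapChoicePair (x i, x (i + 1))) x

theorem swapChoicePair_involutive : Function.Involutive swapChoicePair := by
  rintro ⟨a, b⟩
  by_cases hab : a ≤ b
  · simp [swapChoicePair, hab]
  · have : b ≤ a - 1 := by omega
    simp only [swapChoicePair, hab, ↓reduceIte, this, Prod.mk.injEq, and_true]
    omega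

variable (i : ℕ)

@[simp]
theorem updatePair_apply_self (ab : ℕ × ℕ) (x : ℕ → ℕ) : updatePair i ab x i = ab.1 := by
  simp [updatePair]

@[simp]
theorem updatePair_apply_succ (ab : ℕ × ℕ) (x : ℕ → ℕ) : updatePair i ab x (i + 1) = ab.2 := by
  simp [updatePair]

theorem updatePair_apply_of_ne (ab : ℕ × ℕ) (x : ℕ → ℕ) {j : ℕ} (hi : j ≠ i) (hi' : j ≠ i + 1) :
    updatePair i ab x j = x j := by
  simp [updatePair, hi, hi']

theorem swapChoices_updatePair (ab : ℕ × ℕ) (x : ℕ → ℕ) :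
    swapChoices i (updatePair i ab x) = updatePair i (swapChoicePair ab) x := by
  funext j
  simp only [swapChoices, updatePair, if_neg (Nat.succ_ne_self i), if_true]
  split_ifs <;> rfl

theorem swap_self_succ_lt_iff {j k : ℕ} (hj : j ≠ i + 1) : Equiv.swap i (i + 1) k < j ↔ k < j := by
  rw [Equiv.swap_apply_def]
  split_ifs <;> omega

theorem shuffleSeq_swapChoices (x : ℕ → ℕ) (j : ℕ) :
    shuffleSeq (swapChoices i x) j = shuffleSeq x (Equiv.swap i (i + 1) j) := by
  induction j using Nat.strong_induction_on with | _ j ih =>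
  set y := swapChoices i x
  have hprefix : ∀ j' ≤ j, j' ≠ i + 1 →
      (· ∉ shufflePrefix y j') = (· ∉ shufflePrefix x j') := by
    intro j' hj' hj'i
    funext m
    simp only [mem_shufflePrefix, eq_iff_iff, not_iff_not]
    constructor
    · rintro ⟨k, hk, rfl⟩
      exact ⟨_, (swap_self_succ_lt_iff i hj'i).2 hk, (ih k (by omega)).symm⟩
    · rintro ⟨k, hk, rfl⟩
      refine ⟨Equiv.swap i (i + 1) k, (swap_self_succ_lt_iff i hj'i).2 hk, ?_⟩
      rw [ih _ (by rw [← swap_self_succ_lt_iff i hj'i] at hk; omega), Equiv.swap_apply_self]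
  by_cases hji : j = i
  · subst hji
    rw [Equiv.swap_apply_left, shuffleSeq_succ, shuffleSeq, hprefix j le_rfl (by omega)]
    simp only [y, swapChoices, updatePair_apply_self, swapChoicePair]
    congr 1
    split_ifs <;> omega
  by_cases hji' : j = i + 1
  · subst hji'
    rw [Equiv.swap_apply_right, shuffleSeq_succ, hprefix i (by omega) (by omega), shuffleSeq]
    simp only [y, swapChoices, updatePair_apply_self, updatePair_apply_succ, swapChoicePair]
    congr 1
    split_ifs <;> omega
  · rw [Equiv.swap_apply_of_ne_of_ne hji hji', shuffleSeq, shuffleSeq, hprefix j le_rfl hji']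
    simp only [y, swapChoices, updatePair_apply_of_ne i _ _ hji hji']

end Swap

section Measurability

theorem DependsOn.measurable_of_finite {ι β : Type*} {α : ι → Type*}
    [∀ i, MeasurableSpace (α i)] [∀ i, Countable (α i)] [∀ i, MeasurableSingletonClass (α i)]
    [MeasurableSpace β] [Nonempty β] {f : (Π i, α i) → β} {s : Set ι} (hs : s.Finite)
    (hf : DependsOn f s) : Measurable f := by
  have := hs.to_subtype
  obtain ⟨g, rfl⟩ := dependsOn_iff_exists_comp.1 hf
  exact (measurable_of_countable g).comp (Set.measurable_restrict s)

theorem dependsOn_shufflePrefix (j : ℕ) : DependsOn (shufflePrefix · j) (Set.Iio j) := by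
  induction j with
  | zero => exact fun _ _ _ => rfl
  | succ j ih =>
    intro x y h
    have hj : shufflePrefix x j = shufflePrefix y j :=
      ih fun k hk => h k (Set.mem_Iio.2 (Nat.lt_succ_of_lt hk))
    simp only [shufflePrefix, hj, h j (Set.mem_Iio.2 j.lt_succ_self)]

theorem dependsOn_shuffleSeq (j : ℕ) : DependsOn (shuffleSeq · j) (Set.Iic j) := by
  intro x y h
  have hj : shufflePrefix x j = shufflePrefix y j :=
    dependsOn_shufflePrefix j fun k hk => h k (Set.Iio_subset_Iic_self hk)
  simp only [shuffleSeq, hj, h j Set.self_mem_Iic]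

theorem measurable_shuffleSeq (j : ℕ) : Measurable (shuffleSeq · j) :=
  (dependsOn_shuffleSeq j).measurable_of_finite (Set.finite_Iic j)

theorem measurable_updatePair (i : ℕ) :
    Measurable fun p : (ℕ × ℕ) × (ℕ → ℕ) => updatePair i p.1 p.2 := by
  refine measurable_pi_lambda _ fun j => ?_
  simp only [updatePair]
  split_ifs
  exacts [measurable_fst.fst, measurable_fst.snd, (measurable_pi_apply j).comp measurable_snd]

theorem measurable_swapChoices (i : ℕ) : Measurable (swapChoices i) :=
  (measurable_updatePair i).comp
    (((measurable_of_countable swapChoicePair).comp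
      ((measurable_pi_apply i).prodMk (measurable_pi_apply (i + 1)))).prodMk measurable_id)

end Measurability

section MeasureTransfer

variable {α β γ : Type*} [MeasurableSpace α] [MeasurableSpace β] [MeasurableSpace γ]

theorem MeasureTheory.Measure.map_withDensity_comp {μ : Measure α} {e : α → β} (he : Measurable e)
    {g : β → ℝ≥0∞} (hg : Measurable g) :
    (μ.withDensity (g ∘ e)).map e = (μ.map e).withDensity g := by
  ext s hs
  rw [Measure.map_apply he hs, withDensity_apply _ (he hs), withDensity_apply _ hs,
    setLIntegral_map hs hg he]
  rfl

theorem MeasureTheory.Measure.map_map_prod_eq_withDensity {μ : Measure α} {ρ : Measure β}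
    [SFinite μ] [SFinite ρ] {τ : α → α} {c : α × β → γ} {T : γ → γ} {g₀ : α → ℝ≥0∞}
    {g : γ → ℝ≥0∞} (hτ : Measurable τ) (hc : Measurable c) (hT : Measurable T)
    (hg₀ : Measurable g₀) (hg : Measurable g) (hμ : μ.map τ = μ.withDensity g₀)
    (hTc : ∀ p, T (c p) = c (τ p.1, p.2)) (hgc : ∀ p, g (c p) = g₀ p.1) :
    ((μ.prod ρ).map c).map T = ((μ.prod ρ).map c).withDensity g := by
  calc ((μ.prod ρ).map c).map T = (μ.prod ρ).map (c ∘ Prod.map τ id) := by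
        rw [Measure.map_map hT hc]
        congr 1
        exact funext hTc
    _ = ((μ.map τ).prod (ρ.map id)).map c := by
        rw [Measure.map_prod_map _ _ hτ measurable_id, Measure.map_map hc (hτ.prodMap measurable_id)]
    _ = ((μ.prod ρ).withDensity (g ∘ c)).map c := by
        rw [Measure.map_id, hμ, prod_withDensity_left hg₀]
        congr 2
        exact funext fun p => (hgc p).symm
    _ = ((μ.prod ρ).map c).withDensity g := Measure.map_withDensity_comp hc hg

theorem MeasureTheory.Measure.map_map_eq_withDensity_of_invariant {μ : Measure α} {T : α → α}
    {W : α → β} {g : α → ℝ≥0∞} {f : β → ℝ≥0∞} {E : Set α} (hT : Measurable T)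
    (hW : Measurable W) (hf : Measurable f) (hE : MeasurableSet E)
    (hμ : μ.map T = μ.withDensity g) (hTE : T ⁻¹' E = E) (hWT : ∀ x ∈ E, W (T x) = W x)
    (hfE : ∀ x ∈ E, f (W x) = 1) (hgE : ∀ x ∉ E, g x = f (W x)) :
    (μ.map T).map W = (μ.map W).withDensity f := by
  ext A hA
  have hB : MeasurableSet (W ⁻¹' A) := hW hA
  have hinv : T ⁻¹' (W ⁻¹' A ∩ E) = W ⁻¹' A ∩ E := by
    ext x
    rw [Set.preimage_inter, hTE]
    simp only [Set.mem_inter_iff, Set.mem_preimage]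
    exact ⟨fun ⟨hA, hx⟩ => ⟨hWT x hx ▸ hA, hx⟩, fun ⟨hA, hx⟩ => ⟨(hWT x hx).symm ▸ hA, hx⟩⟩
  have hon : ∫⁻ x in W ⁻¹' A ∩ E, g x ∂μ = ∫⁻ x in W ⁻¹' A ∩ E, f (W x) ∂μ := by
    rw [← withDensity_apply _ (hB.inter hE), ← hμ, Measure.map_apply hT (hB.inter hE), hinv,
      setLIntegral_congr_fun (hB.inter hE) fun x hx => hfE x hx.2, setLIntegral_one]
  have hoff : ∫⁻ x in W ⁻¹' A \ E, g x ∂μ = ∫⁻ x in W ⁻¹' A \ E, f (W x) ∂μ :=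
    setLIntegral_congr_fun (hB.diff hE) fun x hx => hgE x hx.2
  rw [Measure.map_apply hW hA, hμ, withDensity_apply _ hB, withDensity_apply _ hA,
    setLIntegral_map hA hf hW, ← lintegral_inter_add_sdiff _ _ hE, hon, hoff,
    lintegral_inter_add_sdiff _ _ hE]

end MeasureTransfer

section DrivingSequence

theorem map_swapChoicePair {μ : Measure (ℕ × ℕ)} {G : ℕ → ℝ≥0∞} {r : ℝ≥0∞} (hr₀ : r ≠ 0)
    (hr : r ≠ ∞) (hG : ∀ k, G (k + 1) = r * G k) (hμ : ∀ a b, μ {(a, b)} = G a * G b) :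
    μ.map swapChoicePair = μ.withDensity fun ab => if ab.1 ≤ ab.2 then r else r⁻¹ := by
  refine Measure.ext_of_singleton fun ⟨a, b⟩ => ?_
  have hpre : swapChoicePair ⁻¹' {(a, b)} = {swapChoicePair (a, b)} := by
    rw [← swapChoicePair_involutive.image_eq_preimage_symm, Set.image_singleton]
  rw [Measure.map_apply (measurable_of_countable _) (measurableSet_singleton _), hpre,
    withDensity_apply _ (measurableSet_singleton _), lintegral_singleton, hμ]
  simp only [swapChoicePair]
  split_ifs with hab
  · rw [hμ, hG]
    ring
  · obtain ⟨c, rfl⟩ : ∃ c, a = c + 1 := ⟨a - 1, by omega⟩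
    rw [hμ, Nat.add_sub_cancel, hG, ← mul_assoc, ← mul_assoc, ENNReal.inv_mul_cancel hr₀ hr,
      one_mul, mul_comm]

theorem ProbabilityTheory.iIndepFun.indepFun_of_measurable_iSup {Ω ι γ δ : Type*}
    {_ : MeasurableSpace Ω} {μ : Measure Ω} {β : ι → Type*} {m : ∀ i, MeasurableSpace (β i)}
    [MeasurableSpace γ] [MeasurableSpace δ] {f : ∀ i, Ω → β i} (h : iIndepFun f μ)
    (hf : ∀ i, Measurable (f i)) {S T : Set ι} (hST : Disjoint S T) {F : Ω → γ} {G : Ω → δ}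
    (hF : Measurable[⨆ i ∈ S, (m i).comap (f i)] F)
    (hG : Measurable[⨆ i ∈ T, (m i).comap (f i)] G) : IndepFun F G μ := by
  rw [IndepFun_iff_Indep]
  exact indep_of_indep_of_le
    (indep_iSup_of_disjoint (fun i => (hf i).comap_le) ((iIndepFun_iff_iIndep m f μ).1 h) hST)
    hF.comap_le hG.comap_le


variable {Ω : Type*} [MeasurableSpace Ω] {P : Measure Ω} {ξ : ℕ → Ω → ℕ}

theorem ProbabilityTheory.iIndepFun.map_eq_map_updatePair_prod [IsProbabilityMeasure P]
    (hindep : iIndepFun ξ P) (hmeas : ∀ j, Measurable (ξ j)) (i : ℕ) :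
    P.map (fun ω j => ξ j ω) =
      ((P.map fun ω => (ξ i ω, ξ (i + 1) ω)).prod
        (P.map fun ω => updatePair i (0, 0) fun j => ξ j ω)).map
        fun p => updatePair i p.1 p.2 := by
  set S : Set ℕ := {i, i + 1}
  have hξ : ∀ {T : Set ℕ}, ∀ j ∈ T,
      Measurable[⨆ k ∈ T, MeasurableSpace.comap (ξ k) inferInstance] (ξ j) := fun {T} j hj =>
    (comap_measurable (ξ j)).mono
      (le_iSup₂ (f := fun k (_ : k ∈ T) => MeasurableSpace.comap (ξ k) inferInstance) j hj) le_rfl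
  have hpair : Measurable[⨆ k ∈ S, MeasurableSpace.comap (ξ k) inferInstance]
      fun ω => (ξ i ω, ξ (i + 1) ω) :=
    (hξ i (by simp [S])).prodMk (hξ (i + 1) (by simp [S]))
  have hrest : Measurable[⨆ k ∈ Sᶜ, MeasurableSpace.comap (ξ k) inferInstance]
      fun ω => updatePair i (0, 0) fun j => ξ j ω := by
    refine @measurable_pi_lambda _ _ _ (⨆ k ∈ Sᶜ, MeasurableSpace.comap (ξ k) inferInstance) _ _
      fun j => ?_
    simp only [updatePair]
    split_ifs with h₁ h₂
    · exact measurable_const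
    · exact measurable_const
    · exact hξ j (by simp [S, h₁, h₂])
  have hX : Measurable fun ω j => ξ j ω := measurable_pi_lambda _ hmeas
  have hpair' : Measurable fun ω => (ξ i ω, ξ (i + 1) ω) := (hmeas i).prodMk (hmeas (i + 1))
  have hrest' : Measurable fun ω => updatePair i (0, 0) fun j => ξ j ω :=
    (measurable_updatePair i).comp (measurable_const.prodMk hX)
  rw [← (hindep.indepFun_of_measurable_iSup hmeas disjoint_compl_right hpair
    hrest).map_prod_eq_prod_map_map hpair'.aemeasurable hrest'.aemeasurable,
    Measure.map_map (measurable_updatePair i) (hpair'.prodMk hrest')]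
  congr 1
  funext ω j
  simp only [Function.comp_apply, updatePair]
  split_ifs with h₁ h₂
  exacts [h₁ ▸ rfl, h₂ ▸ rfl, rfl]

theorem ProbabilityTheory.iIndepFun.map_pair_singleton (hindep : iIndepFun ξ P)
    (hmeas : ∀ j, Measurable (ξ j)) (i a b : ℕ) :
    P.map (fun ω => (ξ i ω, ξ (i + 1) ω)) {(a, b)} = P {ω | ξ i ω = a} * P {ω | ξ (i + 1) ω = b} :=
  calc P.map (fun ω => (ξ i ω, ξ (i + 1) ω)) {(a, b)}
      = P (ξ i ⁻¹' {a} ∩ ξ (i + 1) ⁻¹' {b}) := by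
        rw [Measure.map_apply ((hmeas i).prodMk (hmeas (i + 1))) (measurableSet_singleton _)]
        congr 1
        ext ω
        simp
    _ = P (ξ i ⁻¹' {a}) * P (ξ (i + 1) ⁻¹' {b}) :=
        (hindep.indepFun (by omega : i ≠ i + 1)).measure_inter_preimage_eq_mul _ _
          (measurableSet_singleton a) (measurableSet_singleton b)

noncomputable def swapDensity (q : ℝ) (i : ℕ) (x : ℕ → ℕ) : ℝ≥0∞ :=
  if x i ≤ x (i + 1) then ENNReal.ofReal q else (ENNReal.ofReal q)⁻¹

theorem measurable_swapDensity (q : ℝ) (i : ℕ) : Measurable (swapDensity q i) :=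
  Measurable.ite (measurableSet_le (measurable_pi_apply i) (measurable_pi_apply (i + 1)))
    measurable_const measurable_const

theorem map_swapChoices_eq_withDensity [IsProbabilityMeasure P] {q : ℝ} (hq0 : 0 < q)
    (hmeas : ∀ j, Measurable (ξ j)) (hindep : iIndepFun ξ P)
    (hgeom : ∀ j i : ℕ, P {ω | ξ j ω = i} = ENNReal.ofReal ((1 - q) * q ^ i)) (i : ℕ) :
    (P.map fun ω j => ξ j ω).map (swapChoices i) =
      (P.map fun ω j => ξ j ω).withDensity (swapDensity q i) := by
  have hgeom_succ : ∀ k, ENNReal.ofReal ((1 - q) * q ^ (k + 1))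
      = ENNReal.ofReal q * ENNReal.ofReal ((1 - q) * q ^ k) := fun k => by
    rw [← ENNReal.ofReal_mul hq0.le]
    ring_nf
  have hpair := map_swapChoicePair (ENNReal.ofReal_pos.2 hq0).ne' ENNReal.ofReal_ne_top
    hgeom_succ fun a b => by rw [hindep.map_pair_singleton hmeas i, hgeom, hgeom]
  rw [hindep.map_eq_map_updatePair_prod hmeas i]
  exact Measure.map_map_prod_eq_withDensity (measurable_of_countable _) (measurable_updatePair i)
    (measurable_swapChoices i) (measurable_of_countable _) (measurable_swapDensity q i) hpair
    (fun p => swapChoices_updatePair i p.1 p.2) fun p => by simp [swapDensity]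

end DrivingSequence

section Exchangeability

theorem swapCoord_eq_comp_swap {α : Type*} (i : ℕ) (w : ℕ → α) :
    swapCoord i w = w ∘ Equiv.swap i (i + 1) := by
  funext j
  simp only [swapCoord, Function.comp_apply, Equiv.swap_apply_def]
  split_ifs <;> rfl

theorem swapCoord_eq_self {α : Type*} {i : ℕ} {w : ℕ → α} (h : w i = w (i + 1)) :
    swapCoord i w = w := by
  funext j
  simp only [swapCoord]
  split_ifs with h₁ h₂
  exacts [h₁ ▸ h.symm, h₂ ▸ h, rfl]

theorem measurable_swapCoord {α : Type*} [MeasurableSpace α] (i : ℕ) :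
    Measurable (swapCoord (α := α) i) := by
  rw [show swapCoord (α := α) i = (· ∘ Equiv.swap i (i + 1)) from
    funext (swapCoord_eq_comp_swap i)]
  exact measurable_pi_lambda _ fun j => measurable_pi_apply _

theorem zpow_sign_eq_ite (q t : ℝ) :
    q ^ (SignType.sign t : ℤ) = if 0 < t then q else if t < 0 then q⁻¹ else 1 := by
  rcases lt_trichotomy t 0 with h | rfl | h
  · simp [h, h.not_gt]
  · simp
  · simp [h]

theorem measurable_ofReal_zpow_sign_sub (q : ℝ) (i : ℕ) :
    Measurable fun w : ℕ → ℝ => ENNReal.ofReal (q ^ (SignType.sign (w (i + 1) - w i) : ℤ)) := by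
  simp_rw [zpow_sign_eq_ite]
  exact ENNReal.measurable_ofReal.comp (Measurable.ite (measurableSet_lt measurable_const
    (by fun_prop)) measurable_const (Measurable.ite (measurableSet_lt (by fun_prop)
      measurable_const) measurable_const measurable_const))

theorem swapDensity_eq_ofReal_zpow_sign {q : ℝ} (hq0 : 0 < q) {v : ℕ → ℝ} (hv : Monotone v)
    {x : ℕ → ℕ} {i : ℕ} (hx : v (shuffleSeq x i) ≠ v (shuffleSeq x (i + 1))) :
    swapDensity q i x =
      ENNReal.ofReal (q ^ (SignType.sign (v (shuffleSeq x (i + 1)) - v (shuffleSeq x i)) : ℤ)) := by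
  have hlt : v (shuffleSeq x i) < v (shuffleSeq x (i + 1)) ↔ x i ≤ x (i + 1) := by
    rw [le_iff_shuffleSeq_lt]
    exact ⟨hv.reflect_lt, fun h => (hv h.le).lt_of_ne hx⟩
  simp only [swapDensity, zpow_sign_eq_ite, sub_pos, sub_neg]
  by_cases hle : x i ≤ x (i + 1)
  · rw [if_pos hle, if_pos (hlt.2 hle)]
  · rw [if_neg hle, if_neg (mt hlt.1 hle), if_pos ((not_lt.1 (mt hlt.1 hle)).lt_of_ne hx.symm),
      ENNReal.ofReal_inv_of_pos hq0]

end Exchangeability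

theorem stmt_9_general (q : ℝ) (hq0 : 0 < q)
    (Ω : Type*) [MeasurableSpace Ω] (P : Measure Ω) [IsProbabilityMeasure P]
    (ξ : ℕ → Ω → ℕ) (hmeas : ∀ j, Measurable (ξ j))
    (hindep : iIndepFun ξ P)
    (hgeom : ∀ j i : ℕ, P {ω | ξ j ω = i} = ENNReal.ofReal ((1 - q) * q ^ i))
    (v : ℕ → ℝ) (hv : Monotone v) :
    IsQExchangeable q (P.map (fun ω (j : ℕ) => v (shuffleSeq (fun t => ξ t ω) j))) := by
  intro i
  set W : (ℕ → ℕ) → ℕ → ℝ := fun x j => v (shuffleSeq x j)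
  have hW : Measurable W := measurable_pi_lambda _ fun j =>
    (measurable_of_countable v).comp (measurable_shuffleSeq j)
  have hWswap : ∀ x, W (swapChoices i x) = swapCoord i (W x) := fun x => by
    funext j
    simp only [W, shuffleSeq_swapChoices, swapCoord_eq_comp_swap, Function.comp_apply]
  rw [show P.map (fun ω j => v (shuffleSeq (fun t => ξ t ω) j)) = (P.map fun ω j => ξ j ω).map W
      from (Measure.map_map hW (measurable_pi_lambda _ hmeas)).symm,
    Measure.map_map (measurable_swapCoord i) hW,
    show swapCoord i ∘ W = W ∘ swapChoices i from funext fun x => (hWswap x).symm,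
    ← Measure.map_map hW (measurable_swapChoices i)]
  refine Measure.map_map_eq_withDensity_of_invariant (E := {x | W x i = W x (i + 1)})
    (measurable_swapChoices i) hW (measurable_ofReal_zpow_sign_sub q i)
    (measurableSet_eq_fun ((measurable_pi_apply i).comp hW) ((measurable_pi_apply _).comp hW))
    (map_swapChoices_eq_withDensity hq0 hmeas hindep hgeom i) ?_
    (fun x hx => by rw [hWswap, swapCoord_eq_self hx])
    (fun x (hx : W x i = W x (i + 1)) => by simp [hx])
    (fun x hx => swapDensity_eq_ofReal_zpow_sign hq0 hv hx)
  ext x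
  simp [hWswap, swapCoord, eq_comm]

/-- for every weakly increasing `v : ℕ → ℝ`, the law `P^{(v)}` of the infinite
`q`-shuffle `w = (v_{σ(0)}, v_{σ(1)}, …)` of `v` is a `q`-exchangeable probability measure
on `ℝ^ℕ`.  Here `ξ_0, ξ_1, …` are independent with the (0-indexed) geometric law
`P(ξ = i) = (1-q) q^i`. -/
theorem stmt_9 (q : ℝ) (hq0 : 0 < q) (hq1 : q < 1)
    (Ω : Type*) [MeasurableSpace Ω] (P : Measure Ω) [IsProbabilityMeasure P]
    (ξ : ℕ → Ω → ℕ) (hmeas : ∀ j, Measurable (ξ j))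
    (hindep : iIndepFun ξ P)
    (hgeom : ∀ j i : ℕ, P {ω | ξ j ω = i} = ENNReal.ofReal ((1 - q) * q ^ i))
    (v : ℕ → ℝ) (hv : Monotone v) :
    IsQExchangeable q (P.map (fun ω (j : ℕ) => v (shuffleSeq (fun t => ξ t ω) j))) :=
  stmt_9_general q hq0 Ω P ξ hmeas hindep hgeom v hv
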